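/- If the Hermitian matrix variable W restricted to the edges of a tree graph on N vertices has all diagonal entries positive and all 2×2 principal submatrices corresponding to tree edges PSD with rank one (i.e., |W_{ij}|² = W_{ii}W_{jj} for every tree edge {i,j}), then there exists a vector v ∈ ℂ^N with |v_i|² = W_{ii} for all i and v_i conj(v_j) = W_{ij} for all tree edges {i,j} (rank-one completion along a tree). -/

import Mathlib

/-!
On each edge `W i j = √(W i i) √(W j j) · exp (i arg W i j)`, and the phase of the reversed
edge is the inverse one. On a tree such an edge function is a
coboundary: fixing a root `r`, let `u x` be the product of the phases along the unique path
from `r` to `x`; for adjacent `i`, `j` one of the two paths extends the other by the edge,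
so `(u i)⁻¹ * u j` is the phase of `{i, j}`. Then `v i = √(W i i) * (u i)⁻¹` works.
-/

open ComplexConjugate

namespace SimpleGraph

variable {V : Type*} {G : SimpleGraph V}

lemma IsAcyclic.concat_or_concat_of_adj (hG : G.IsAcyclic) {r v w : V} {p : G.Walk r v}
    {q : G.Walk r w} (hp : p.IsPath) (hq : q.IsPath) (hadj : G.Adj v w) :
    q = p.concat hadj ∨ p = q.concat hadj.symm := by
  by_cases hv : v ∈ q.support
  · exact .inl (hG.path_concat hp hq hadj hv)
  · exact .inr (hG.path_concat hq hp hadj.symm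
      (hG.mem_support_of_ne_mem_support_of_adj_of_isPath hp hq hadj hv))

def Walk.holonomy {M : Type*} [Monoid M] (g : V → V → M) {u v : V} (p : G.Walk u v) : M :=
  (p.darts.map fun d => g d.fst d.snd).prod

@[simp]
lemma Walk.holonomy_concat {M : Type*} [Monoid M] (g : V → V → M) {u v w : V}
    (p : G.Walk u v) (h : G.Adj v w) : (p.concat h).holonomy g = p.holonomy g * g v w := by
  simp [holonomy, darts_concat]

theorem IsTree.exists_inv_mul_eq {M : Type*} [Group M] (hG : G.IsTree) (g : V → V → M)
    (hg : ∀ i j, G.Adj i j → g j i = (g i j)⁻¹) :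
    ∃ u : V → M, ∀ i j, G.Adj i j → (u i)⁻¹ * u j = g i j := by
  obtain ⟨r⟩ := hG.connected.nonempty
  choose p hp using fun x => (hG.connected r x).exists_isPath
  refine ⟨fun x => (p x).holonomy g, fun i j hij => ?_⟩
  dsimp only
  rcases hG.isAcyclic.concat_or_concat_of_adj (hp i) (hp j) hij with h | h
  · rw [h, Walk.holonomy_concat, inv_mul_cancel_left]
  · rw [h, Walk.holonomy_concat, mul_inv_rev, inv_mul_cancel_right, hg j i hij.symm]

end SimpleGraph

lemma Circle.exp_arg_conj (z : ℂ) :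
    Circle.exp (Complex.arg (conj z)) = (Circle.exp (Complex.arg z))⁻¹ := by
  simpa only [Real.Angle.toCircle_coe, Real.Angle.toCircle_neg] using
    congrArg Real.Angle.toCircle (Complex.arg_conj_coe_angle z)

/-- Rank-one completion along a tree: entry data on the vertices and edges of a
tree satisfying the rank-one (PSD, determinant-zero) conditions is realizable by
a vector `v`. -/
theorem rank_one_completion_along_tree (N : ℕ) (G : SimpleGraph (Fin N))
    (hT : G.IsTree)
    (Wd : Fin N → ℝ) (hWd : ∀ i, 0 < Wd i)
    (Wo : Fin N → Fin N → ℂ)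
    (hherm : ∀ i j, G.Adj i j → Wo j i = (starRingEnd ℂ) (Wo i j))
    (hrank1 : ∀ i j, G.Adj i j → Complex.normSq (Wo i j) = Wd i * Wd j) :
    ∃ v : Fin N → ℂ, (∀ i, Complex.normSq (v i) = Wd i) ∧
      ∀ i j, G.Adj i j → v i * (starRingEnd ℂ) (v j) = Wo i j := by
  obtain ⟨u, hu⟩ := hT.exists_inv_mul_eq (fun i j => Circle.exp (Complex.arg (Wo i j)))
    fun i j hij => by rw [hherm i j hij, Circle.exp_arg_conj]
  refine ⟨fun i => (√(Wd i) : ℂ) * ((u i)⁻¹ : Circle), fun i => ?_, fun i j hij => ?_⟩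
  · simp [Complex.normSq_ofReal, Real.mul_self_sqrt (hWd i).le]
  · have hnorm : ‖Wo i j‖ = √(Wd i) * √(Wd j) := by
      rw [Complex.norm_def, hrank1 i j hij, Real.sqrt_mul (hWd i).le]
    calc (√(Wd i) : ℂ) * ((u i)⁻¹ : Circle) * conj ((√(Wd j) : ℂ) * ((u j)⁻¹ : Circle))
        = ((√(Wd i) * √(Wd j) : ℝ) : ℂ) * ↑((u i)⁻¹ * u j) := by
          rw [map_mul, Circle.coe_inv_eq_conj (u j), Complex.conj_conj, Complex.conj_ofReal]
          push_cast
          ring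
      _ = Wo i j := by
          rw [hu i j hij, ← hnorm, Circle.coe_exp, Complex.norm_mul_exp_arg_mul_I]
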